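/- arXiv:2110.10559 — 9 statements merged into one kernel-verified Lean document; each statement's English description precedes it below -/
import Mathlib

section
/- Let Λ be a left hereditary ring and M a left Λ-module. Then M is stable if and only if every Λ-linear map from M to Λ is zero. -/
/-- A module is *stable* if it has no nonzero projective direct summand. -/
def IsStable (Λ M : Type*) [Ring Λ] [AddCommGroup M] [Module Λ M] : Prop :=
  ∀ K P : Submodule Λ M, IsCompl K P → Module.Projective Λ P → P = ⊥

/-- A ring is *left hereditary* if every left ideal is projective as a left module. -/
def IsLeftHereditary (Λ : Type*) [Ring Λ] : Prop :=
  ∀ I : Ideal Λ, Module.Projective Λ I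

theorem stmt_1 (Λ M : Type*) [Ring Λ] [AddCommGroup M] [Module Λ M]
    (hΛ : IsLeftHereditary Λ) :
    IsStable Λ M ↔ ∀ f : M →ₗ[Λ] Λ, f = 0 := by
  constructor
  · -- stable → all maps to Λ are zero
    intro hst f
    by_contra hf
    -- I = range f is projective by hereditarity
    have hI : Module.Projective Λ (LinearMap.range f) := hΛ (LinearMap.range f)
    -- lift the identity along rangeRestrict
    obtain ⟨s, hs⟩ := Module.projective_lifting_property (R := Λ)
      (f.rangeRestrict) (LinearMap.id) (LinearMap.surjective_rangeRestrict f)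
    have hsec : ∀ y : LinearMap.range f, f.rangeRestrict (s y) = y := fun y ↦
      congrFun (congrArg DFunLike.coe hs) y
    -- s is injective
    have hsinj : Function.Injective s := by
      intro a b hab
      have := hsec a
      rw [hab, hsec] at this
      exact this.symm
    -- P := range s is a complement of ker f
    set P := LinearMap.range s with hP
    have hcompl : IsCompl (LinearMap.ker f) P := by
      constructor
      · rw [disjoint_iff]
        ext x
        simp only [Submodule.mem_inf, Submodule.mem_bot, LinearMap.mem_ker]
        constructor
        · rintro ⟨hxk, y, rfl⟩
          have hy : f.rangeRestrict (s y) = 0 := by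
            ext; simpa using hxk
          rw [hsec] at hy
          rw [hy]; simp
        · rintro rfl; simp
      · rw [codisjoint_iff, eq_top_iff]
        intro m _
        have : m - s (f.rangeRestrict m) + s (f.rangeRestrict m) = m := by abel
        rw [← this]
        refine Submodule.add_mem_sup ?_ ⟨f.rangeRestrict m, rfl⟩
        have : f.rangeRestrict (m - s (f.rangeRestrict m)) = 0 := by
          rw [map_sub, hsec, sub_self]
        have h0 : f (m - s (f.rangeRestrict m)) = 0 := by
          have := congrArg (Subtype.val) this
          simpa using this
        exact h0
    -- P is projective, being isomorphic to range f
    have hPproj : Module.Projective Λ P := by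
      have e : (LinearMap.range f) ≃ₗ[Λ] P :=
        LinearEquiv.ofInjective s hsinj
      exact Module.Projective.of_equiv e
    have hPbot := hst (LinearMap.ker f) P hcompl hPproj
    -- but P = ⊥ forces f = 0
    apply hf
    ext m
    have hm : s (f.rangeRestrict m) ∈ P := ⟨_, rfl⟩
    rw [hPbot, Submodule.mem_bot] at hm
    have := hsec (f.rangeRestrict m)
    rw [hm, map_zero] at this
    have := congrArg Subtype.val this
    simpa using this.symm
  · -- all maps zero → stable
    intro h K P hcompl hproj
    by_contra hPbot
    obtain ⟨x, hxP, hx0⟩ := Submodule.ne_bot_iff P |>.mp hPbot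
    obtain ⟨s, hs⟩ := hproj.out
    have hsx : s ⟨x, hxP⟩ ≠ 0 := by
      intro h0
      apply hx0
      have := hs ⟨x, hxP⟩
      rw [h0, map_zero] at this
      exact congrArg Subtype.val this.symm
    obtain ⟨i, hi⟩ := Finsupp.ne_iff.mp hsx
    simp only [Finsupp.coe_zero, Pi.zero_apply] at hi
    set g : M →ₗ[Λ] Λ :=
      (Finsupp.lapply i).comp (s.comp (P.projectionOnto K hcompl.symm))
    have := h g
    have hgx : g x = (s ⟨x, hxP⟩) i := by
      simp only [g, LinearMap.comp_apply, Finsupp.lapply_apply]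
      rw [Submodule.linearProjOfIsCompl_apply_left hcompl.symm ⟨x, hxP⟩]
    rw [this] at hgx
    exact hi hgx.symm
end

section
/- Let Λ be a left hereditary ring. For any left Λ-module M, the sum R(M) of all stable submodules of M is itself a stable submodule, and every stable submodule of M is contained in R(M). Moreover, any Λ-linear map f : M → N maps R(M) into R(N). -/
/-- `stableRadical Λ M` is the sum of all stable submodules of `M`. -/
def stableRadical (Λ M : Type*) [Ring Λ] [AddCommGroup M] [Module Λ M] : Submodule Λ M :=
  sSup {S : Submodule Λ M | IsStable Λ S}

/-- Over a left hereditary ring, a stable module has no nonzero maps to `Λ`. -/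
theorem hom_zero_of_stable {Λ S : Type*} [Ring Λ] [AddCommGroup S] [Module Λ S]
    (hΛ : IsLeftHereditary Λ) (h : IsStable Λ S) (φ : S →ₗ[Λ] Λ) : φ = 0 := by
  have hI : Module.Projective Λ (LinearMap.range φ) := hΛ (LinearMap.range φ)
  obtain ⟨s, hs⟩ := Module.projective_lifting_property φ.rangeRestrict
    (LinearMap.id (R := Λ) (M := LinearMap.range φ)) φ.surjective_rangeRestrict
  have hsec : ∀ y : LinearMap.range φ, φ.rangeRestrict (s y) = y := fun y =>
    LinearMap.congr_fun hs y
  have hinj : Function.Injective s := Function.LeftInverse.injective hsec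
  have hdisj : Disjoint (LinearMap.ker φ) (LinearMap.range s) := by
    rw [disjoint_iff, eq_bot_iff]
    rintro x ⟨hk, y, rfl⟩
    have hy : y = 0 := by
      have := hsec y
      rw [Subtype.ext_iff] at this
      simp only [LinearMap.rangeRestrict, LinearMap.codRestrict_apply] at this
      have hk' : φ (s y) = 0 := hk
      rw [hk'] at this
      exact Subtype.ext this.symm
    simp [hy]
  have hcod : Codisjoint (LinearMap.ker φ) (LinearMap.range s) := by
    rw [codisjoint_iff, eq_top_iff]
    intro x _
    have hx : x - s (φ.rangeRestrict x) ∈ LinearMap.ker φ := by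
      have : φ.rangeRestrict (x - s (φ.rangeRestrict x)) = 0 := by
        rw [map_sub, hsec, sub_self]
      rw [LinearMap.mem_ker]
      have := congrArg (Subtype.val) this
      simpa using this
    have : x = (x - s (φ.rangeRestrict x)) + s (φ.rangeRestrict x) := by abel
    rw [this]
    exact Submodule.add_mem_sup hx ⟨_, rfl⟩
  have hP : Module.Projective Λ (LinearMap.range s) :=
    Module.Projective.of_equiv (LinearEquiv.ofInjective s hinj)
  have hbot := h (LinearMap.ker φ) (LinearMap.range s) ⟨hdisj, hcod⟩ hP
  ext x
  have : s (φ.rangeRestrict x) = 0 := by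
    have : s (φ.rangeRestrict x) ∈ LinearMap.range s := ⟨_, rfl⟩
    rw [hbot] at this
    simpa using this
  have h0 : φ.rangeRestrict x = 0 := by
    have := hsec (φ.rangeRestrict x)
    rw [this.symm.trans (congrArg φ.rangeRestrict ‹s (φ.rangeRestrict x) = 0›)]
    simp
  have := congrArg Subtype.val h0
  simpa using this

/-- If a module has no nonzero maps to `Λ`, it is stable. -/
theorem stable_of_hom_zero {Λ S : Type*} [Ring Λ] [AddCommGroup S] [Module Λ S]
    (h : ∀ φ : S →ₗ[Λ] Λ, φ = 0) : IsStable Λ S := by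
  intro K P hc hP
  obtain ⟨s, hs⟩ := Module.projective_def'.mp hP
  rw [eq_bot_iff]
  intro x hx
  set pr := Submodule.linearProjOfIsCompl P K hc.symm with hpr
  have key : ∀ a : P, (Finsupp.lapply a ∘ₗ s ∘ₗ pr : S →ₗ[Λ] Λ) = 0 := fun a => h _
  have hzero : s ⟨x, hx⟩ = 0 := by
    ext a
    have := LinearMap.congr_fun (key a) x
    simp only [LinearMap.comp_apply, Finsupp.lapply_apply, LinearMap.zero_apply] at this
    rw [hpr] at this
    have hproj : Submodule.linearProjOfIsCompl P K hc.symm x = ⟨x, hx⟩ :=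
      Submodule.linearProjOfIsCompl_apply_left hc.symm ⟨x, hx⟩
    rw [hproj] at this
    simpa using this
  have : (⟨x, hx⟩ : P) = 0 := by
    have := LinearMap.congr_fun hs ⟨x, hx⟩
    rw [LinearMap.comp_apply, hzero, map_zero] at this
    exact this.symm
  simpa [Subtype.ext_iff] using this

theorem rad_hom_zero {Λ M : Type*} [Ring Λ] [AddCommGroup M] [Module Λ M]
    (hΛ : IsLeftHereditary Λ) (φ : (stableRadical Λ M) →ₗ[Λ] Λ) : φ = 0 := by
  have key : ∀ S : Submodule Λ M, IsStable Λ S →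
      S ≤ (LinearMap.ker φ).map (stableRadical Λ M).subtype := by
    intro S hS x hx
    have hle : S ≤ stableRadical Λ M := le_sSup hS
    have h0 : φ ∘ₗ Submodule.inclusion hle = 0 := hom_zero_of_stable hΛ hS _
    exact ⟨⟨x, hle hx⟩, LinearMap.congr_fun h0 ⟨x, hx⟩, rfl⟩
  have hle : stableRadical Λ M ≤ (LinearMap.ker φ).map (stableRadical Λ M).subtype :=
    sSup_le key
  ext x
  obtain ⟨x, hx⟩ := x
  obtain ⟨⟨y, hy⟩, hk, hxy⟩ := hle hx
  have : (⟨y, hy⟩ : stableRadical Λ M) = ⟨x, hx⟩ := Subtype.ext hxy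
  rw [this] at hk
  simpa using hk

theorem stmt_5 (Λ M N : Type*) [Ring Λ] [AddCommGroup M] [Module Λ M]
    [AddCommGroup N] [Module Λ N] (hΛ : IsLeftHereditary Λ) (f : M →ₗ[Λ] N) :
    IsStable Λ (stableRadical Λ M) ∧
    (∀ S : Submodule Λ M, IsStable Λ S → S ≤ stableRadical Λ M) ∧
    Submodule.map f (stableRadical Λ M) ≤ stableRadical Λ N := by
  refine ⟨stable_of_hom_zero (rad_hom_zero hΛ), fun S hS => le_sSup hS, ?_⟩
  have hmap : IsStable Λ (Submodule.map f (stableRadical Λ M)) := by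
    apply stable_of_hom_zero
    intro φ
    set g : stableRadical Λ M →ₗ[Λ] Submodule.map f (stableRadical Λ M) :=
      f.restrict (fun x hx => Submodule.mem_map_of_mem hx) with hg
    have hsurj : Function.Surjective g := by
      rintro ⟨y, x, hx, rfl⟩
      exact ⟨⟨x, hx⟩, rfl⟩
    have h0 : φ ∘ₗ g = 0 := rad_hom_zero hΛ _
    ext y
    obtain ⟨x, rfl⟩ := hsurj y
    exact LinearMap.congr_fun h0 x
  exact le_sSup hmap
end

section
/- Let Λ be a left hereditary ring and let f, g : M → N be Λ-linear maps with M stable. If f − g factors through a projective left Λ-module, then f = g. -/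
theorem hom_eq_zero (Λ M : Type*) [Ring Λ] [AddCommGroup M] [Module Λ M]
    (hΛ : IsLeftHereditary Λ) (hM : IsStable Λ M) (φ : M →ₗ[Λ] Λ) : φ = 0 := by
  set I : Ideal Λ := LinearMap.range φ with hI
  haveI : Module.Projective Λ I := hΛ I
  have hsurj : Function.Surjective φ.rangeRestrict := φ.surjective_rangeRestrict
  obtain ⟨σ, hσ⟩ := Module.projective_lifting_property φ.rangeRestrict LinearMap.id hsurj
  have hσ' : ∀ x : I, φ.rangeRestrict (σ x) = x := fun x => LinearMap.congr_fun hσ x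
  have hinj : Function.Injective σ := by
    intro a b hab
    have := hσ' a
    rw [hab, hσ' b] at this
    exact this.symm
  have hcompl : IsCompl (LinearMap.ker φ.rangeRestrict) (LinearMap.range σ) := by
    constructor
    · rw [disjoint_iff]
      ext x
      simp only [Submodule.mem_inf, Submodule.mem_bot, LinearMap.mem_ker, LinearMap.mem_range]
      constructor
      · rintro ⟨hk, y, rfl⟩
        have : y = 0 := by
          have := hσ' y
          rw [hk] at this
          exact this.symm
        rw [this]; simp
      · rintro rfl; exact ⟨by simp, 0, by simp⟩
    · rw [codisjoint_iff, eq_top_iff]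
      intro x _
      rw [Submodule.mem_sup]
      refine ⟨x - σ (φ.rangeRestrict x), ?_, σ (φ.rangeRestrict x), ⟨_, rfl⟩, by abel⟩
      have h1 : φ (σ (φ.rangeRestrict x)) = φ x :=
        congrArg Subtype.val (hσ' (φ.rangeRestrict x))
      simp [LinearMap.mem_ker, h1]
  haveI : Module.Projective Λ (LinearMap.range σ) :=
    Module.Projective.of_equiv (LinearEquiv.ofInjective σ hinj)
  have hbot := hM _ _ hcompl this
  have hσ0 : σ = 0 := by
    ext x
    have : σ x ∈ LinearMap.range σ := ⟨x, rfl⟩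
    rw [hbot] at this
    simpa using this
  have : ∀ x : I, (x : Λ) = 0 := by
    intro x
    have := hσ' x
    rw [hσ0] at this
    simpa using congrArg Subtype.val this.symm
  ext m
  exact this ⟨φ m, ⟨m, rfl⟩⟩

theorem stmt_6 (Λ M N : Type*) [Ring Λ] [AddCommGroup M] [Module Λ M]
    [AddCommGroup N] [Module Λ N] (hΛ : IsLeftHereditary Λ) (hM : IsStable Λ M)
    (f g : M →ₗ[Λ] N)
    (h : ∃ (P : Type _) (_ : AddCommGroup P) (_ : Module Λ P),
      Module.Projective Λ P ∧ ∃ (α : M →ₗ[Λ] P) (β : P →ₗ[Λ] N), f - g = β ∘ₗ α) :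
    f = g := by
  obtain ⟨P, _, _, hP, α, β, hfg⟩ := h
  obtain ⟨s, hs⟩ := hP.out
  have hzero : ∀ p : P, (Finsupp.lapply p ∘ₗ s ∘ₗ α : M →ₗ[Λ] Λ) = 0 := fun p =>
    hom_eq_zero Λ M hΛ hM _
  have hα : α = 0 := by
    ext m
    have hsz : s (α m) = 0 := by
      ext p
      exact congrFun (congrArg DFunLike.coe (hzero p)) m
    have := hs (α m)
    rw [hsz] at this
    simpa using this.symm
  have : f - g = 0 := by rw [hfg, hα]; simp
  exact sub_eq_zero.mp this
end

section
/- Let Λ be a left hereditary ring. If there exists an injective Λ-linear map from Λ (as a left module over itself) into a stable left Λ-module S, then every left Λ-module embeds into a stable left Λ-module. -/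
universe v u

/-- A projective module with no nonzero maps to the base ring is trivial. -/
lemma aux_proj_triv {Λ P : Type*} [Ring Λ] [AddCommGroup P] [Module Λ P]
    (hP : Module.Projective Λ P) (h0 : ∀ φ : P →ₗ[Λ] Λ, φ = 0) (x : P) : x = 0 := by
  obtain ⟨s, hs⟩ := Module.projective_def.mp hP
  have hsx : s x = 0 := by
    ext a
    have := h0 ((Finsupp.lapply a).comp s)
    simpa using LinearMap.congr_fun this x
  have := hs x
  rw [hsx] at this
  simpa using this.symm

/-- If every linear map `T → Λ` is zero, then `T` is stable. -/
lemma aux_stable_of_hom_zero {Λ T : Type*} [Ring Λ] [AddCommGroup T] [Module Λ T]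
    (h0 : ∀ φ : T →ₗ[Λ] Λ, φ = 0) : IsStable Λ T := by
  intro K P hKP hP
  have h0P : ∀ φ : (↥P) →ₗ[Λ] Λ, φ = 0 := by
    intro φ
    have := h0 (φ.comp (P.projectionOnto K hKP.symm))
    ext x
    have := LinearMap.congr_fun this (x : T)
    simpa [Submodule.projectionOnto_apply_left hKP.symm x] using this
  refine (Submodule.eq_bot_iff P).mpr fun x hx => ?_
  exact congrArg Subtype.val (aux_proj_triv hP h0P ⟨x, hx⟩)

/-- Over a left hereditary ring, a stable module has no nonzero maps to the ring. -/
lemma aux_hom_zero_of_stable {Λ : Type u} [Ring Λ] (hΛ : IsLeftHereditary Λ)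
    {S : Type*} [AddCommGroup S] [Module Λ S] (hS : IsStable Λ S)
    (φ : S →ₗ[Λ] Λ) : φ = 0 := by
  set I : Ideal Λ := LinearMap.range φ with hI
  have hproj : Module.Projective Λ I := hΛ I
  set φ' : S →ₗ[Λ] I := φ.rangeRestrict with hφ'
  have hsurj : Function.Surjective φ' := φ.surjective_rangeRestrict
  obtain ⟨σ, hσ⟩ := Module.projective_lifting_property φ' (LinearMap.id) hsurj
  have hσap : ∀ y : I, φ' (σ y) = y := fun y => LinearMap.congr_fun hσ y
  -- `IsCompl (ker φ') (range σ)`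
  have hcompl : IsCompl (LinearMap.ker φ') (LinearMap.range σ) := by
    constructor
    · rw [disjoint_iff]
      refine (Submodule.eq_bot_iff _).mpr fun x hx => ?_
      obtain ⟨hk, y, rfl⟩ := Submodule.mem_inf.mp hx
      have : φ' (σ y) = 0 := hk
      rw [hσap y] at this
      rw [this]; simp
    · rw [codisjoint_iff]
      refine Submodule.eq_top_iff'.mpr fun x => ?_
      refine Submodule.mem_sup.mpr ⟨x - σ (φ' x), ?_, σ (φ' x), ⟨φ' x, rfl⟩, by abel⟩
      simp [LinearMap.mem_ker, hσap]
  have hσinj : Function.Injective σ := by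
    intro a b hab
    have := hσap a; rw [hab, hσap b] at this; exact this.symm
  have hrproj : Module.Projective Λ (LinearMap.range σ) :=
    Module.Projective.of_equiv (LinearEquiv.ofInjective σ hσinj)
  have hbot := hS _ _ hcompl hrproj
  -- range σ = ⊥ gives σ = 0, hence I trivial, hence φ = 0
  have hσ0 : ∀ y : I, σ y = 0 := fun y => by
    have : σ y ∈ LinearMap.range σ := ⟨y, rfl⟩
    rw [hbot] at this; simpa using this
  have hI0 : ∀ y : I, y = 0 := fun y => by
    have := hσap y; rw [hσ0 y] at this; simpa using this.symm
  rw [← LinearMap.range_eq_bot, ← hI]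
  refine (Submodule.eq_bot_iff _).mpr fun x hx => ?_
  exact congrArg Subtype.val (hI0 ⟨x, hx⟩)

theorem stmt_7 (Λ : Type u) [Ring Λ] (hΛ : IsLeftHereditary Λ)
    (S : Type max u v) [AddCommGroup S] [Module Λ S] (hS : IsStable Λ S)
    (f : Λ →ₗ[Λ] S) (hf : Function.Injective f) :
    ∀ (M : Type max u v) [AddCommGroup M] [Module Λ M],
      ∃ (T : ModuleCat.{max u v} Λ), IsStable Λ T ∧
        ∃ g : M →ₗ[Λ] T, Function.Injective g := by
  intro M _ _
  classical
  -- free presentation of M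
  set π : (M →₀ Λ) →ₗ[Λ] M := Finsupp.linearCombination Λ id with hπ
  have hπs : Function.Surjective π := fun m => ⟨Finsupp.single m 1, by simp [hπ]⟩
  -- embed the free module into a direct sum of copies of S
  set ι : (M →₀ Λ) →ₗ[Λ] (M →₀ S) := Finsupp.mapRange.linearMap f with hι
  have hιinj : Function.Injective ι :=
    Finsupp.mapRange_injective (f : Λ → S) f.map_zero hf
  set K' : Submodule Λ (M →₀ S) := (LinearMap.ker π).map ι with hK'
  set T := (M →₀ S) ⧸ K' with hT
  -- all maps from M →₀ S to Λ are zero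
  have hS'0 : ∀ φ : (M →₀ S) →ₗ[Λ] Λ, φ = 0 := by
    intro φ
    refine Finsupp.lhom_ext fun a b => ?_
    have := aux_hom_zero_of_stable hΛ hS (φ.comp (Finsupp.lsingle a))
    simpa using LinearMap.congr_fun this b
  have hT0 : ∀ φ : T →ₗ[Λ] Λ, φ = 0 := by
    intro φ
    have := hS'0 (φ.comp K'.mkQ)
    refine LinearMap.ext fun t => ?_
    obtain ⟨x, rfl⟩ := K'.mkQ_surjective t
    exact LinearMap.congr_fun this x
  refine ⟨ModuleCat.of Λ T, aux_stable_of_hom_zero hT0, ?_⟩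
  -- construct the embedding M → T
  have hle : LinearMap.ker π ≤ LinearMap.ker (K'.mkQ.comp ι) := by
    intro x hx
    simp only [LinearMap.mem_ker, LinearMap.comp_apply, Submodule.mkQ_apply,
      Submodule.Quotient.mk_eq_zero]
    exact Submodule.mem_map_of_mem hx
  set hbar : ((M →₀ Λ) ⧸ LinearMap.ker π) →ₗ[Λ] T := (LinearMap.ker π).liftQ _ hle with hh
  have hgle : LinearMap.ker (K'.mkQ.comp ι) ≤ LinearMap.ker π := by
    intro x hx
    simp only [LinearMap.mem_ker, LinearMap.comp_apply, Submodule.mkQ_apply,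
      Submodule.Quotient.mk_eq_zero, hK'] at hx
    obtain ⟨y, hy, hyx⟩ := hx
    have : y = x := hιinj hyx
    rwa [← this]
  have hinj : Function.Injective hbar := by
    rw [← LinearMap.ker_eq_bot, hh]
    exact Submodule.ker_liftQ_eq_bot _ _ _ hgle
  set e := π.quotKerEquivOfSurjective hπs with he
  refine ⟨hbar.comp (e.symm : M →ₗ[Λ] ((M →₀ Λ) ⧸ LinearMap.ker π)), ?_⟩
  exact hinj.comp e.symm.injective
end

section
/- Let Λ be a left hereditary ring and M a left Λ-module. Suppose there exists an internal direct sum decomposition M = K ⊕ P with P projective such that for every decomposition M = K' ⊕ P' with P' projective one has K ⊆ K'. Then the projection α : M → P is a universal arrow from M to projective modules: for every Λ-linear map α' : M → P' with P' projective there is a unique β : P → P' with β ∘ α = α'. -/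
universe v u

theorem stmt_12 (Λ : Type u) [Ring Λ] (hΛ : IsLeftHereditary Λ)
    (M : Type v) [AddCommGroup M] [Module Λ M]
    (K P : Submodule Λ M) (hKP : IsCompl K P) (hP : Module.Projective Λ P)
    (hmin : ∀ K' P' : Submodule Λ M, IsCompl K' P' → Module.Projective Λ P' → K ≤ K') :
    ∀ (P' : Type v) [AddCommGroup P'] [Module Λ P'], Module.Projective Λ P' →
      ∀ α' : M →ₗ[Λ] P', ∃! β : P →ₗ[Λ] P',
        β ∘ₗ (P.linearProjOfIsCompl K hKP.symm) = α' := by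
  intro P' _ _ hP' α'
  -- Step 1: K is contained in the kernel of every map M → Λ.
  have hker : ∀ g : M →ₗ[Λ] Λ, K ≤ LinearMap.ker g := by
    intro g
    haveI : Module.Projective Λ (LinearMap.range g) := hΛ (LinearMap.range g)
    obtain ⟨σ, hσ⟩ := Module.projective_lifting_property g.rangeRestrict LinearMap.id
      g.surjective_rangeRestrict
    have hσinj : Function.Injective σ := by
      intro a b hab
      have := congrArg g.rangeRestrict hab
      rwa [← LinearMap.comp_apply, ← LinearMap.comp_apply, hσ, LinearMap.id_apply,
        LinearMap.id_apply] at this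
    haveI : Module.Projective Λ (LinearMap.range σ) :=
      Module.Projective.of_equiv (LinearEquiv.ofInjective σ hσinj)
    set f : M →ₗ[Λ] LinearMap.range σ :=
      LinearMap.codRestrict (LinearMap.range σ) (σ ∘ₗ g.rangeRestrict)
        (fun x => ⟨g.rangeRestrict x, rfl⟩) with hf
    have hproj : ∀ x : LinearMap.range σ, f x = x := by
      rintro ⟨x, i, rfl⟩
      apply Subtype.ext
      simp only [hf, LinearMap.codRestrict_apply, LinearMap.comp_apply]
      have : g.rangeRestrict (σ i) = i := by
        rw [← LinearMap.comp_apply, hσ, LinearMap.id_apply]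
      show σ (g.rangeRestrict (σ i)) = σ i
      rw [this]
    have hcompl := (LinearMap.isCompl_of_proj hproj).symm
    have hK : K ≤ LinearMap.ker f := hmin _ _ hcompl ‹Module.Projective Λ (LinearMap.range σ)›
    intro k hk
    have hfk : f k = 0 := hK hk
    have : σ (g.rangeRestrict k) = 0 := congrArg Subtype.val hfk
    have h0 : g.rangeRestrict k = 0 := hσinj (by simpa using this)
    have : g k = 0 := congrArg Subtype.val h0
    simpa [LinearMap.mem_ker] using this
  -- Step 2: K ≤ ker α', using a free module embedding of P'.
  have hkerα : K ≤ LinearMap.ker α' := by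
    obtain ⟨s, hs⟩ := (Module.projective_def' (R := Λ) (P := P')).mp hP'
    intro k hk
    have hcoord : ∀ p : P', (Finsupp.lapply p ∘ₗ s ∘ₗ α') k = 0 := fun p =>
      hker (Finsupp.lapply p ∘ₗ s ∘ₗ α') hk
    have hs0 : s (α' k) = 0 := by
      ext p
      simpa using hcoord p
    have : (Finsupp.linearCombination Λ (id : P' → P')) (s (α' k)) = α' k := by
      rw [← LinearMap.comp_apply, hs, LinearMap.id_apply]
    rw [LinearMap.mem_ker, ← this, hs0, map_zero]
  -- Step 3: existence and uniqueness.
  refine ⟨α' ∘ₗ P.subtype, ?_, ?_⟩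
  · ext m
    simp only [LinearMap.comp_apply, Submodule.subtype_apply]
    have hsum : ((P.linearProjOfIsCompl K hKP.symm m : M)) + (K.linearProjOfIsCompl P hKP.symm.symm m : M) = m :=
      Submodule.projection_add_projection_eq_self hKP.symm m
    have h0 : α' ((K.linearProjOfIsCompl P hKP.symm.symm m : M)) = 0 :=
      hkerα (Submodule.coe_mem _)
    conv_rhs => rw [← hsum]
    rw [map_add, h0, add_zero]
  · intro β hβ
    ext ⟨p, hp⟩
    have h1 := congrFun (congrArg DFunLike.coe hβ) p
    have h2 : (P.linearProjOfIsCompl K hKP.symm) p = ⟨p, hp⟩ :=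
      Submodule.linearProjOfIsCompl_apply_left hKP.symm ⟨p, hp⟩
    simp only [LinearMap.comp_apply, h2] at h1
    simpa using h1
end

section
/- Let Λ be a left hereditary ring and M a left Λ-module admitting a surjection α : M → P onto a projective module P that is universal from M to projective modules (i.e., every map from M to a projective factors uniquely through α). Then the decomposition M = Ker(α) ⊕ S induced by a splitting of α satisfies: for every decomposition M = K' ⊕ P' with P' projective, Ker(α) ⊆ K', and there is a projective submodule P'' of S with S = P'' ⊕ (a complement mapping isomorphically to P') and K' = Ker(α) ⊕ P''. -/
universe v u

/-- A split pair gives a complement decomposition: `ker f` and `range g` are complementary. -/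
lemma split_isCompl {R : Type*} {A B : Type*} [Ring R] [AddCommGroup A] [AddCommGroup B]
    [Module R A] [Module R B] (f : A →ₗ[R] B) (g : B →ₗ[R] A)
    (h : ∀ y, f (g y) = y) : IsCompl (LinearMap.ker f) (LinearMap.range g) := by
  constructor
  · rw [Submodule.disjoint_def]
    rintro x hx ⟨y, rfl⟩
    have : y = 0 := by rw [← h y]; exact hx
    simp [this]
  · rw [codisjoint_iff, eq_top_iff]
    intro x _
    have hx : x = (x - g (f x)) + g (f x) := by abel
    rw [hx]
    exact Submodule.add_mem_sup (by simp [h]) ⟨f x, rfl⟩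

theorem stmt_13 (Λ : Type u) [Ring Λ] (hΛ : IsLeftHereditary Λ)
    (M : Type v) [AddCommGroup M] [Module Λ M]
    (P : Type v) [AddCommGroup P] [Module Λ P] (hP : Module.Projective Λ P)
    (α : M →ₗ[Λ] P) (hα : Function.Surjective α)
    (huniv : ∀ (P' : Type v) [AddCommGroup P'] [Module Λ P'], Module.Projective Λ P' →
      ∀ α' : M →ₗ[Λ] P', ∃! β : P →ₗ[Λ] P', β ∘ₗ α = α')
    (s : P →ₗ[Λ] M) (hs : α ∘ₗ s = LinearMap.id) :
    ∀ K' P' : Submodule Λ M, IsCompl K' P' → Module.Projective Λ P' →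
      LinearMap.ker α ≤ K' ∧
      ∃ P'' : Submodule Λ M, P'' ≤ LinearMap.range s ∧ Module.Projective Λ P'' ∧
        (∃ C : Submodule Λ M, C ≤ LinearMap.range s ∧ Disjoint P'' C ∧
          P'' ⊔ C = LinearMap.range s ∧ Nonempty (C ≃ₗ[Λ] P')) ∧
        Disjoint (LinearMap.ker α) P'' ∧ LinearMap.ker α ⊔ P'' = K' := by
  classical
  intro K' P' hcompl hP'
  haveI := hP
  haveI := hP'
  set S : Submodule Λ M := LinearMap.range s with hS
  have hαs : ∀ y, α (s y) = y := fun y => DFunLike.congr_fun hs y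
  have hsinj : Function.Injective s := Function.LeftInverse.injective hαs
  have hScompl : IsCompl (LinearMap.ker α) S := split_isCompl α s hαs
  -- projection onto P' along K'
  set π : M →ₗ[Λ] P' := Submodule.projectionOnto P' K' hcompl.symm with hπdef
  obtain ⟨β, hβ, -⟩ := huniv P' hP' π
  have hker : LinearMap.ker α ≤ K' := by
    intro x hx
    have h0 : π x = 0 := by
      rw [← hβ]
      simp [LinearMap.comp_apply, LinearMap.mem_ker.mp hx]
    exact (Submodule.linearProjOfIsCompl_apply_eq_zero_iff hcompl.symm).mp h0
  refine ⟨hker, ?_⟩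
  -- S is projective
  have hSproj : Module.Projective Λ S :=
    Module.Projective.of_equiv (LinearEquiv.ofInjective s hsinj)
  -- restrict π to S
  set ρ : S →ₗ[Λ] P' := π ∘ₗ S.subtype with hρdef
  have hρsurj : Function.Surjective ρ := by
    intro y
    have hy : (y : M) ∈ LinearMap.ker α ⊔ S := by
      rw [hScompl.sup_eq_top]; trivial
    obtain ⟨k, hk, t, ht, hkt⟩ := Submodule.mem_sup.mp hy
    refine ⟨⟨t, ht⟩, ?_⟩
    have hk0 : π k = 0 :=
      Submodule.projectionOnto_apply_of_mem_right hcompl.symm (hker hk)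
    have : π t = π (k + t) := by rw [map_add, hk0, zero_add]
    have hyy : π (y : M) = y := Submodule.linearProjOfIsCompl_apply_left hcompl.symm y
    simp only [hρdef, LinearMap.comp_apply, Submodule.subtype_apply]
    rw [this, hkt, hyy]
  obtain ⟨σ, hσ⟩ := Module.projective_lifting_property ρ LinearMap.id hρsurj
  have hρσ : ∀ y, ρ (σ y) = y := fun y => DFunLike.congr_fun hσ y
  have hσinj : Function.Injective σ := Function.LeftInverse.injective hρσ
  have hinner : IsCompl (LinearMap.ker ρ) (LinearMap.range σ) := split_isCompl ρ σ hρσ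
  -- define P'' and C
  refine ⟨(LinearMap.ker ρ).map S.subtype, Submodule.map_subtype_le _ _, ?_, ?_, ?_, ?_⟩
  · -- projectivity of P''
    have hkerρproj : Module.Projective Λ (LinearMap.ker ρ) :=
      Module.Projective.of_split (LinearMap.ker ρ).subtype
        (Submodule.linearProjOfIsCompl _ _ hinner)
        (Submodule.linearProjOfIsCompl_comp_subtype hinner)
    exact Module.Projective.of_equiv
      (Submodule.equivMapOfInjective S.subtype (Submodule.injective_subtype S)
        (LinearMap.ker ρ))
  · -- complement C inside S
    refine ⟨(LinearMap.range σ).map S.subtype, Submodule.map_subtype_le _ _, ?_, ?_, ?_⟩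
    · rw [disjoint_iff, ← Submodule.map_inf _ (Submodule.injective_subtype S),
        hinner.inf_eq_bot, Submodule.map_bot]
    · rw [← Submodule.map_sup, hinner.sup_eq_top, Submodule.map_subtype_top]
    · have hC : (LinearMap.range σ).map S.subtype = LinearMap.range (S.subtype ∘ₗ σ) := by
        rw [LinearMap.range_comp]
      rw [hC]
      exact ⟨(LinearEquiv.ofInjective (S.subtype ∘ₗ σ)
        ((Submodule.injective_subtype S).comp hσinj)).symm⟩
  · -- disjointness with ker α
    exact hScompl.disjoint.mono_right (Submodule.map_subtype_le _ _)
  · -- ker α ⊔ P'' = K'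
    have hmap : (LinearMap.ker ρ).map S.subtype = K' ⊓ S := by
      rw [hρdef, LinearMap.ker_comp, hπdef, Submodule.ker_projectionOnto,
        Submodule.map_comap_subtype, inf_comm]
    rw [hmap]
    have := sup_inf_assoc_of_le (α := Submodule Λ M) S hker
    rw [hScompl.sup_eq_top, top_inf_eq] at this
    rw [inf_comm] at this
    exact this.symm
end

section
/- Let C be a complete category, (E, M) a factorization system on C with E contained in the epimorphisms, and suppose C is E-co-well-powered. If X is a full replete subcategory of C closed under products and under M-subobjects (i.e., if m : A → X lies in M with X in X, then A is in X), then X is a reflective subcategory of C, and the reflection unit components lie in E. -/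
open CategoryTheory CategoryTheory.Limits

universe v u

/-- An orthogonal factorization system `(E, M)` on a category. -/
structure FactorizationSystem (C : Type u) [Category.{v} C] where
  E : MorphismProperty C
  M : MorphismProperty C
  E_iso : ∀ {X Y : C} (f : X ⟶ Y), IsIso f → E f
  M_iso : ∀ {X Y : C} (f : X ⟶ Y), IsIso f → M f
  E_comp : ∀ {X Y Z : C} (f : X ⟶ Y) (g : Y ⟶ Z), E f → E g → E (f ≫ g)
  M_comp : ∀ {X Y Z : C} (f : X ⟶ Y) (g : Y ⟶ Z), M f → M g → M (f ≫ g)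
  fac : ∀ {X Y : C} (f : X ⟶ Y),
    ∃ (Z : C) (e : X ⟶ Z) (m : Z ⟶ Y), E e ∧ M m ∧ e ≫ m = f
  orth : ∀ {A B X Y : C} (e : A ⟶ B) (m : X ⟶ Y), E e → M m →
    ∀ (u : A ⟶ X) (w : B ⟶ Y), u ≫ m = e ≫ w →
      ∃! d : B ⟶ X, e ≫ d = u ∧ d ≫ m = w

/-- `C` is `E`-co-well-powered: every object admits a set (indexed family) of
`E`-quotients containing, up to isomorphism, every `E`-morphism out of it. -/
def ECoWellPowered {C : Type u} [Category.{v} C] (FS : FactorizationSystem C) : Prop :=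
  ∀ X : C, ∃ (ι : Type v) (Z : ι → C) (e : ∀ i, X ⟶ Z i),
    (∀ i, FS.E (e i)) ∧
    ∀ {Y : C} (f : X ⟶ Y), FS.E f → ∃ (i : ι) (φ : Z i ≅ Y), e i ≫ φ.hom = f

theorem stmt_15 (C : Type u) [Category.{v} C] [HasLimits C]
    (FS : FactorizationSystem C)
    (hE : ∀ {X Y : C} (f : X ⟶ Y), FS.E f → Epi f)
    (hcwp : ECoWellPowered FS)
    (X : C → Prop)
    (hreplete : ∀ {A B : C}, (A ≅ B) → X A → X B)
    (hprod : ∀ (ι : Type v) (F : ι → C), (∀ i, X (F i)) → X (∏ᶜ F))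
    (hMsub : ∀ {A B : C} (m : A ⟶ B), FS.M m → X B → X A) :
    ∀ A : C, ∃ (RA : C) (η : A ⟶ RA), X RA ∧ FS.E η ∧
      ∀ (B : C), X B → ∀ f : A ⟶ B, ∃! g : RA ⟶ B, η ≫ g = f := by
  intro A
  obtain ⟨ι, Z, e, hEe, hcover⟩ := hcwp A
  set ι' := {i : ι // X (Z i)}
  set F : ι' → C := fun i => Z i.1 with hF
  set f : A ⟶ ∏ᶜ F := Pi.lift (fun i => e i.1) with hf
  obtain ⟨RA, η, m, hη, hm, hfac⟩ := FS.fac f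
  refine ⟨RA, η, hMsub m hm (hprod ι' F (fun i => i.2)), hη, ?_⟩
  intro B hB g
  obtain ⟨W, e', m', he', hm', hfac'⟩ := FS.fac g
  have hXW : X W := hMsub m' hm' hB
  obtain ⟨i, φ, hφ⟩ := hcover e' he'
  have hXZ : X (Z i) := hreplete φ.symm hXW
  have hπ : f ≫ Pi.π F ⟨i, hXZ⟩ = e i := by simp [hf]
  refine ⟨m ≫ Pi.π F ⟨i, hXZ⟩ ≫ φ.hom ≫ m', ?_, ?_⟩
  · simp only [Category.assoc]
    rw [reassoc_of% hfac, reassoc_of% hπ, reassoc_of% hφ, hfac']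
  · intro y hy
    have := hE η hη
    rw [← cancel_epi η, hy]
    rw [reassoc_of% hfac, reassoc_of% hπ, reassoc_of% hφ, hfac']
end

section
/- Let C be a category with a factorization system (E, M) where E is contained in the epimorphisms, and let X be a reflective full replete subcategory of C whose reflection unit components all lie in E. Then X is closed under M-subobjects: if m : A → X is in M and X is an object of X, then A is an object of X. -/
open CategoryTheory

universe v u

theorem stmt_16 (C : Type u) [Category.{v} C]
    (FS : FactorizationSystem C)
    (hE : ∀ {X Y : C} (f : X ⟶ Y), FS.E f → Epi f)
    (X : C → Prop)
    (hreplete : ∀ {A B : C}, (A ≅ B) → X A → X B)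
    (hrefl : ∀ A : C, ∃ (RA : C) (η : A ⟶ RA), X RA ∧ FS.E η ∧
      ∀ (B : C), X B → ∀ f : A ⟶ B, ∃! g : RA ⟶ B, η ≫ g = f) :
    ∀ {A B : C} (m : A ⟶ B), FS.M m → X B → X A := by
  intro A B m hm hB
  obtain ⟨RA, η, hRA, hη, hu⟩ := hrefl A
  obtain ⟨g, hg, -⟩ := hu B hB m
  obtain ⟨d, ⟨hd1, hd2⟩, -⟩ := FS.orth η m hη hm (𝟙 A) g (by simp [hg])
  have hepi := hE η hη
  have hd3 : d ≫ η = 𝟙 RA := by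
    rw [← cancel_epi η, ← Category.assoc, hd1]; simp
  exact hreplete ⟨d, η, hd3, hd1⟩ hRA
end

section
/- Let Λ be a left hereditary ring such that the direct product of every family of projective left Λ-modules is projective. Then for every left Λ-module M there is a surjection α : M → P onto a projective module which is universal from M to projective modules (every map from M to a projective factors uniquely through α). -/
universe v u

universe w

open Classical in
lemma kaplansky_ord {Λ : Type u} [Ring Λ] (hΛ : IsLeftHereditary Λ) {ι : Type w}
    [LinearOrder ι] [WellFoundedLT ι] (N : Submodule Λ (ι →₀ Λ)) :
    Module.Projective Λ N := by
  -- N_a = N ∩ (supported on Iic a)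
  set Nle : ι → Submodule Λ (ι →₀ Λ) := fun a => N ⊓ Finsupp.supported Λ Λ (Set.Iic a) with hNle
  set q : ∀ a : ι, ↥(Nle a) →ₗ[Λ] Λ := fun a => (Finsupp.lapply a).comp (Nle a).subtype with hq
  set I : ι → Ideal Λ := fun a => LinearMap.range (q a) with hI
  have hproj : ∀ a, Module.Projective Λ (I a) := fun a => hΛ (I a)
  have hsurj : ∀ a, Function.Surjective ((q a).rangeRestrict) := fun a =>
    LinearMap.surjective_rangeRestrict _
  choose s hs using fun a =>
    Module.projective_lifting_property ((q a).rangeRestrict) (LinearMap.id (M := I a)) (hsurj a)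
  -- c a : I a →ₗ N
  have hle : ∀ a, Nle a ≤ N := fun a => inf_le_left
  set c : ∀ a : ι, ↥(I a) →ₗ[Λ] ↥N := fun a => (Submodule.inclusion (hle a)).comp (s a) with hc
  set f : (Π₀ a : ι, ↥(I a)) →ₗ[Λ] ↥N := DFinsupp.lsum ℕ c with hf
  -- key value lemma : ((c a v : N) : ι →₀ Λ) a = v
  have hval : ∀ a (v : I a), ((c a v : ↥N) : ι →₀ Λ) a = (v : Λ) := by
    intro a v
    have h1 : (q a) (s a v) = (v : Λ) := by
      have := congrArg (fun g => ((g v : ↥(I a)) : Λ)) (hs a)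
      simpa using this
    simpa [hc, hq] using h1
  have hsupp : ∀ a (v : I a), ∀ b, ((c a v : ↥N) : ι →₀ Λ) b ≠ 0 → b ≤ a := by
    intro a v
    intro b hb
    have h2 : ((c a v : ↥N) : ι →₀ Λ) ∈ Finsupp.supported Λ Λ (Set.Iic a) :=
      ((s a v).2).2
    by_contra hgt
    exact hb ((Finsupp.mem_supported' Λ _).mp h2 b hgt)
  -- injectivity
  have hinj : Function.Injective f := by
    rw [injective_iff_map_eq_zero]
    intro x hx
    by_contra hne
    have hsne : x.support.Nonempty := by
      rw [Finset.nonempty_iff_ne_empty, Ne, DFinsupp.support_eq_empty]; exact hne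
    set a := x.support.max' hsne with ha
    have hxa : x a ≠ 0 := (x.mem_support_iff).mp (x.support.max'_mem hsne)
    have hfx : ((f x : ↥N) : ι →₀ Λ) a = (x a : Λ) := by
      rw [hf, DFinsupp.lsum_apply_apply, DFinsupp.sumAddHom_apply, DFinsupp.sum,
        AddSubmonoidClass.coe_finset_sum, Finset.sum_apply']
      rw [Finset.sum_eq_single a]
      · exact hval a (x a)
      · intro b hb hba
        have hblt : b < a := lt_of_le_of_ne (x.support.le_max' b hb) hba
        by_contra h
        exact absurd (hsupp b (x b) a h) (not_le.mpr hblt)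
      · intro h; exact absurd (x.support.max'_mem hsne) h
    rw [hx] at hfx
    simp at hfx
    exact hxa (Subtype.ext hfx.symm)
  -- surjectivity
  have key : ∀ a : ι, ∀ x : ι →₀ Λ, ∀ hx : x ∈ N, ↑x.support ⊆ Set.Iic a →
      (⟨x, hx⟩ : ↥N) ∈ LinearMap.range f := by
    intro a
    induction a using WellFoundedLT.induction with
    | ind a IH =>
      intro x hx hxs
      have hxN : x ∈ Nle a := ⟨hx, (Finsupp.mem_supported Λ x).mpr hxs⟩
      set v : ↥(I a) := (q a).rangeRestrict ⟨x, hxN⟩ with hv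
      set z : ↥N := c a v with hz
      have hza : ((z : ι →₀ Λ)) a = x a := by
        rw [hz, hval a v, hv]; simp [hq]
      set y : ι →₀ Λ := x - (z : ι →₀ Λ) with hy
      have hyN : y ∈ N := N.sub_mem hx z.2
      have hysupp : ↑y.support ⊆ Set.Iio a := by
        intro b hb
        have hb' : y b ≠ 0 := Finsupp.mem_support_iff.mp hb
        have hble : b ≤ a := by
          by_contra hgt
          have h1 : x b = 0 := by
            by_contra h; exact hgt (hxs (Finsupp.mem_support_iff.mpr h))
          have h2 : ((z : ι →₀ Λ)) b = 0 := by
            by_contra h; exact hgt (hsupp a v b h)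
          exact hb' (by simp [hy, h1, h2])
        rcases lt_or_eq_of_le hble with h | h
        · exact h
        · exfalso; apply hb'; subst h; simp [hy, Finsupp.sub_apply, hza]
      have hzr : z ∈ LinearMap.range f := by
        refine ⟨DFinsupp.single a v, ?_⟩
        rw [hf]; simp; exact hz.symm
      by_cases hy0 : y = 0
      · have : (⟨x, hx⟩ : ↥N) = z := by
          apply Subtype.ext
          have : x - (z : ι →₀ Λ) = 0 := hy0
          simpa [sub_eq_zero] using this
        rw [this]; exact hzr
      · have hyne : y.support.Nonempty := Finsupp.support_nonempty_iff.mpr hy0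
        set b := y.support.max' hyne with hb
        have hba : b < a := hysupp (y.support.max'_mem hyne)
        have hys : ↑y.support ⊆ Set.Iic b := fun t ht => y.support.le_max' t ht
        have hyr : (⟨y, hyN⟩ : ↥N) ∈ LinearMap.range f := IH b hba y hyN hys
        have : (⟨x, hx⟩ : ↥N) = ⟨y, hyN⟩ + z := by
          apply Subtype.ext; simp [hy]
        rw [this]
        exact Submodule.add_mem _ hyr hzr
  have hsurjf : Function.Surjective f := by
    intro n
    by_cases hn : (n : ι →₀ Λ) = 0
    · exact ⟨0, by apply Subtype.ext; simp [hn]⟩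
    · have hne : (n : ι →₀ Λ).support.Nonempty := Finsupp.support_nonempty_iff.mpr hn
      set a := (n : ι →₀ Λ).support.max' hne with ha
      have := key a (n : ι →₀ Λ) n.2 (fun t ht => (n : ι →₀ Λ).support.le_max' t ht)
      simpa using this
  exact Module.Projective.of_equiv (LinearEquiv.ofBijective f ⟨hinj, hsurjf⟩)

lemma kaplansky {Λ : Type u} [Ring Λ] (hΛ : IsLeftHereditary Λ) {ι : Type w}
    (N : Submodule Λ (ι →₀ Λ)) : Module.Projective Λ N := by
  letI : LinearOrder ι := IsWellOrder.linearOrder WellOrderingRel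
  haveI : WellFoundedLT ι := ⟨(WellOrderingRel.isWellOrder).wf⟩
  exact kaplansky_ord hΛ N

/-- Over a left hereditary ring, a module which injects into a projective module is projective. -/
lemma proj_of_inj {Λ : Type u} [Ring Λ] (hΛ : IsLeftHereditary Λ)
    {M : Type w} [AddCommGroup M] [Module Λ M] {Q : Type v} [AddCommGroup Q] [Module Λ Q]
    (hQ : Module.Projective Λ Q) (g : M →ₗ[Λ] Q) (hg : Function.Injective g) :
    Module.Projective Λ M := by
  obtain ⟨sQ, hsQ⟩ := (Module.projective_def.mp hQ)
  have hsQinj : Function.Injective sQ := Function.LeftInverse.injective hsQ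
  set h : M →ₗ[Λ] (Q →₀ Λ) := sQ.comp g with hh
  have hinj : Function.Injective h := hsQinj.comp hg
  have := kaplansky hΛ (LinearMap.range h)
  exact Module.Projective.of_equiv (LinearEquiv.ofInjective h hinj).symm

theorem stmt_17 (Λ : Type u) [Ring Λ] (hΛ : IsLeftHereditary Λ)
    (hprod : ∀ (ι : Type max u v) (P : ι → Type max u v)
      [∀ i, AddCommGroup (P i)] [∀ i, Module Λ (P i)],
      (∀ i, Module.Projective Λ (P i)) → Module.Projective Λ (∀ i, P i)) :
    ∀ (M : Type max u v) [AddCommGroup M] [Module Λ M],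
      ∃ (P : ModuleCat.{max u v} Λ), Module.Projective Λ P ∧
        ∃ α : M →ₗ[Λ] P, Function.Surjective α ∧
          ∀ (P' : ModuleCat.{max u v} Λ), Module.Projective Λ P' →
            ∀ α' : M →ₗ[Λ] P', ∃! β : (P : Type max u v) →ₗ[Λ] P', β ∘ₗ α = α' := by
  intro M _ _
  classical
  set S : Set (Submodule Λ M) := {N | Module.Projective Λ (M ⧸ N)} with hS
  set K : Submodule Λ M := sInf S with hK
  have hQproj : Module.Projective Λ (∀ N : S, M ⧸ (N : Submodule Λ M)) :=
    hprod S (fun N => M ⧸ (N : Submodule Λ M)) (fun N => N.2)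
  set φ : M →ₗ[Λ] (∀ N : S, M ⧸ (N : Submodule Λ M)) :=
    LinearMap.pi (fun N => (N : Submodule Λ M).mkQ) with hφ
  have hker : LinearMap.ker φ = K := by
    rw [hφ, LinearMap.ker_pi, hK, sInf_eq_iInf']
    simp [Submodule.ker_mkQ]
  have hKle : K ≤ LinearMap.ker φ := le_of_eq hker.symm
  set φ' : (M ⧸ K) →ₗ[Λ] (∀ N : S, M ⧸ (N : Submodule Λ M)) := K.liftQ φ hKle with hφ'
  have hinj : Function.Injective φ' := by
    rw [← LinearMap.ker_eq_bot, hφ', Submodule.ker_liftQ, hker]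
    simp
  have hP₀ : Module.Projective Λ (M ⧸ K) := proj_of_inj hΛ hQproj φ' hinj
  refine ⟨ModuleCat.of Λ (M ⧸ K), hP₀, K.mkQ, Submodule.mkQ_surjective K, ?_⟩
  intro P' hP' α'
  have hkermem : LinearMap.ker α' ∈ S := by
    have hrange : Module.Projective Λ (LinearMap.range α') :=
      proj_of_inj hΛ hP' (LinearMap.range α').subtype (Submodule.injective_subtype _)
    exact Module.Projective.of_equiv (LinearMap.quotKerEquivRange α').symm
  have hKle' : K ≤ LinearMap.ker α' := sInf_le hkermem
  refine ⟨K.liftQ α' hKle', K.liftQ_mkQ α' hKle', ?_⟩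
  intro β hβ
  apply Submodule.linearMap_qext
  rw [hβ, K.liftQ_mkQ α' hKle']
end
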